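/- arXiv:math/0309150 — 3 statements merged into one kernel-verified Lean document; each statement's English description precedes it below -/
import Mathlib

section
/- Let p be an odd prime and define θ_p : ℤ³ → ℤ by θ_p(x1,x2,x3) = (x1−x2)·(((2x3−x2)^p + x2^p − 2x3^p)/p), where the division by p is exact. If x1 ≡ x1', x2 ≡ x2', x3 ≡ x3' (mod p), then θ_p(x1,x2,x3) ≡ θ_p(x1',x2',x3') (mod p); that is, θ_p descends to a well-defined map (ℤ/pℤ)³ → ℤ/pℤ. -/
/-!
By Fermat's little theorem `p` divides the numerator `(2x₃ - x₂)^p + x₂^p - 2x₃^p`. Raising to the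
`p`-th power turns a congruence mod `p` into one mod `p²`, so changing `x₂, x₃` within their classes
changes the numerator by a multiple of `p²`, hence the quotient by `p` only by a multiple of `p`.
-/

/-- Mochizuki's 3-cocycle on the integers: 
`θ_p(x1,x2,x3) = (x1 - x2) * (((2x3 - x2)^p + x2^p - 2x3^p) / p)`,
where the division by `p` is exact. -/
def mochizukiTheta (p : ℕ) (x1 x2 x3 : ℤ) : ℤ :=
  (x1 - x2) * (((2 * x3 - x2) ^ p + x2 ^ p - 2 * x3 ^ p) / (p : ℤ))

def thetaNumerator (p : ℕ) (b c : ℤ) : ℤ :=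
  (2 * c - b) ^ p + b ^ p - 2 * c ^ p

theorem mochizukiTheta_eq (p : ℕ) (x1 x2 x3 : ℤ) :
    mochizukiTheta p x1 x2 x3 = (x1 - x2) * (thetaNumerator p x2 x3 / p) :=
  rfl

theorem Int.ediv_modEq_ediv_of_sq_dvd_sub {n a b : ℤ} (ha : n ∣ a) (hb : n ∣ b)
    (hab : n ^ 2 ∣ a - b) : a / n ≡ b / n [ZMOD n] := by
  obtain ⟨m, rfl⟩ := ha
  obtain ⟨m', rfl⟩ := hb
  rcases eq_or_ne n 0 with rfl | hn
  · simp
  rw [Int.mul_ediv_cancel_left _ hn, Int.mul_ediv_cancel_left _ hn,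
    Int.modEq_comm, Int.modEq_iff_dvd]
  rw [sq, ← mul_sub] at hab
  exact (mul_dvd_mul_iff_left hn).mp hab

theorem Int.sq_dvd_pow_sub_pow_of_modEq {p : ℕ} {a b : ℤ} (hab : a ≡ b [ZMOD p]) :
    (p : ℤ) ^ 2 ∣ a ^ p - b ^ p := by
  simpa using dvd_sub_pow_of_dvd_sub (Int.ModEq.dvd hab.symm) 1

theorem prime_dvd_thetaNumerator {p : ℕ} (hp : p.Prime) (b c : ℤ) :
    (p : ℤ) ∣ thetaNumerator p b c := by
  have : Fact p.Prime := ⟨hp⟩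
  rw [← ZMod.intCast_zmod_eq_zero_iff_dvd, thetaNumerator]
  push_cast
  rw [ZMod.pow_card, ZMod.pow_card, ZMod.pow_card]
  ring

theorem sq_dvd_thetaNumerator_sub {p : ℕ} {b c b' c' : ℤ} (hb : b ≡ b' [ZMOD p])
    (hc : c ≡ c' [ZMOD p]) :
    (p : ℤ) ^ 2 ∣ thetaNumerator p b c - thetaNumerator p b' c' := by
  have h2cb : 2 * c - b ≡ 2 * c' - b' [ZMOD p] := (hc.mul_left 2).sub hb
  have hsplit : thetaNumerator p b c - thetaNumerator p b' c' =
      ((2 * c - b) ^ p - (2 * c' - b') ^ p) + (b ^ p - b' ^ p) - 2 * (c ^ p - c' ^ p) := by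
    unfold thetaNumerator
    ring
  rw [hsplit]
  exact ((Int.sq_dvd_pow_sub_pow_of_modEq h2cb).add (Int.sq_dvd_pow_sub_pow_of_modEq hb)).sub
    ((Int.sq_dvd_pow_sub_pow_of_modEq hc).mul_left 2)

theorem stmt_1_general (p : ℕ) (hp : p.Prime)
    (x1 x2 x3 x1' x2' x3' : ℤ)
    (h1 : x1 ≡ x1' [ZMOD (p : ℤ)]) (h2 : x2 ≡ x2' [ZMOD (p : ℤ)])
    (h3 : x3 ≡ x3' [ZMOD (p : ℤ)]) :
    mochizukiTheta p x1 x2 x3 ≡ mochizukiTheta p x1' x2' x3' [ZMOD (p : ℤ)] := by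
  rw [mochizukiTheta_eq, mochizukiTheta_eq]
  exact (h1.sub h2).mul <| Int.ediv_modEq_ediv_of_sq_dvd_sub (prime_dvd_thetaNumerator hp _ _)
    (prime_dvd_thetaNumerator hp _ _) (sq_dvd_thetaNumerator_sub h2 h3)

/-- If `x1 ≡ x1'`, `x2 ≡ x2'`, `x3 ≡ x3'` (mod `p`) for an odd prime `p`, then
`θ_p(x1,x2,x3) ≡ θ_p(x1',x2',x3')` (mod `p`); i.e. `θ_p` descends to a well-defined
map `(ℤ/pℤ)³ → ℤ/pℤ`. -/
theorem stmt_1 (p : ℕ) (hp : p.Prime) (hodd : Odd p)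
    (x1 x2 x3 x1' x2' x3' : ℤ)
    (h1 : x1 ≡ x1' [ZMOD (p : ℤ)]) (h2 : x2 ≡ x2' [ZMOD (p : ℤ)])
    (h3 : x3 ≡ x3' [ZMOD (p : ℤ)]) :
    mochizukiTheta p x1 x2 x3 ≡ mochizukiTheta p x1' x2' x3' [ZMOD (p : ℤ)] :=
  stmt_1_general p hp x1 x2 x3 x1' x2' x3' h1 h2 h3
end

section
/- Let A be an (additive) abelian group and let φ be a function assigning to each ordered pair of 4-cycles of S₄ an element of A, satisfying the quandle 2-cocycle identity: for all 4-cycles a, b, c in S₄, φ(a,c) − φ(a,b) − φ(b⁻¹ab, c) + φ(c⁻¹ac, c⁻¹bc) = 0. Then φ(a, a⁻¹) is constant: for all 4-cycles a and b in S₄, φ(a, a⁻¹) = φ(b, b⁻¹). -/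
/-!
Taking `b = a⁻¹` in the cocycle identity, the terms `φ(a, c)` and `φ(a a a⁻¹, c)`
cancel, leaving `φ(a, a⁻¹) = φ(c⁻¹ac, (c⁻¹ac)⁻¹)`: the value `φ(a, a⁻¹)` is invariant under
conjugation by any 4-cycle, hence by the subgroup they generate. The 4-cycles generate `S₄`
(the square of `(0 1 2 3)` times a further 4-cycle is the transposition `(0 1)`), and any two
4-cycles are conjugate in `S₄`.
-/

/-- A permutation of four letters is a 4-cycle iff its cycle type is a single
cycle of length 4. -/
def IsFourCycle (a : Equiv.Perm (Fin 4)) : Prop := a.cycleType = {4}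

open Equiv Equiv.Perm

section QuandleCocycle

variable {G A : Type*} [Group G] [AddCommGroup A] {S : Set G} {φ : G → G → A}

theorem cocycle_apply_inv_conj
    (hφ : ∀ a b c, a ∈ S → b ∈ S → c ∈ S →
      φ a c - φ a b - φ (b⁻¹ * a * b) c + φ (c⁻¹ * a * c) (c⁻¹ * b * c) = 0)
    {a c : G} (ha : a ∈ S) (ha_inv : a⁻¹ ∈ S) (hc : c ∈ S) :
    φ (c⁻¹ * a * c) (c⁻¹ * a * c)⁻¹ = φ a a⁻¹ := by
  have h := hφ a a⁻¹ c ha ha_inv hc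
  have hinv : (c⁻¹ * a * c)⁻¹ = c⁻¹ * a⁻¹ * c := by group
  rw [inv_inv, mul_inv_cancel_right, ← hinv] at h
  rw [← sub_eq_zero, ← h]
  abel

theorem cocycle_apply_inv_conj_of_mem_closure
    (hφ : ∀ a b c, a ∈ S → b ∈ S → c ∈ S →
      φ a c - φ a b - φ (b⁻¹ * a * b) c + φ (c⁻¹ * a * c) (c⁻¹ * b * c) = 0)
    (hS_inv : ∀ a ∈ S, a⁻¹ ∈ S) (hS_conj : ∀ a ∈ S, ∀ g : G, g⁻¹ * a * g ∈ S)
    {g : G} (hg : g ∈ Subgroup.closure S) :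
    ∀ a ∈ S, φ (g⁻¹ * a * g) (g⁻¹ * a * g)⁻¹ = φ a a⁻¹ := by
  induction hg using Subgroup.closure_induction with
  | mem c hc => exact fun a ha ↦ cocycle_apply_inv_conj hφ ha (hS_inv a ha) hc
  | one => simp
  | mul x y _ _ hx hy =>
    intro a ha
    have hconj : (x * y)⁻¹ * a * (x * y) = y⁻¹ * (x⁻¹ * a * x) * y := by group
    rw [hconj, hy _ (hS_conj a ha x), hx a ha]
  | inv x _ hx =>
    intro a ha
    have hconj : x⁻¹ * (x⁻¹⁻¹ * a * x⁻¹) * x = a := by group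
    simpa only [hconj] using (hx _ (hS_conj a ha x⁻¹)).symm

end QuandleCocycle

theorem isFourCycle_inv {a : Perm (Fin 4)} (ha : IsFourCycle a) : IsFourCycle a⁻¹ :=
  (cycleType_inv a).trans ha

theorem isFourCycle_conj {a : Perm (Fin 4)} (ha : IsFourCycle a) (c : Perm (Fin 4)) :
    IsFourCycle (c⁻¹ * a * c) := by
  simpa only [IsFourCycle, inv_inv] using (cycleType_conj (τ := c⁻¹) (σ := a)).trans ha

theorem closure_setOf_isFourCycle : Subgroup.closure {a | IsFourCycle a} = ⊤ := by
  have hrot : finRotate 4 ∈ Subgroup.closure {a | IsFourCycle a} :=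
    Subgroup.subset_closure (cycleType_finRotate (n := 2))
  have hswap : swap 0 (finRotate 4 0) = finRotate 4 * finRotate 4 * c[0, 3, 1, 2] := by decide
  have hcycle : c[(0 : Fin 4), 3, 1, 2] ∈ Subgroup.closure {a | IsFourCycle a} :=
    Subgroup.subset_closure (show IsFourCycle _ by unfold IsFourCycle; decide)
  rw [eq_top_iff, ← closure_cycle_adjacent_swap (isCycle_finRotate (n := 2))
    (support_finRotate (n := 2)) 0, Subgroup.closure_le, Set.insert_subset_iff,
    Set.singleton_subset_iff, SetLike.mem_coe, SetLike.mem_coe, hswap]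
  exact ⟨hrot, mul_mem (mul_mem hrot hrot) hcycle⟩

/-- If `φ`, defined on ordered pairs of 4-cycles of `S₄` with values in an abelian
group `A`, satisfies the quandle 2-cocycle identity
`φ(a,c) - φ(a,b) - φ(a*b,c) + φ(a*c,b*c) = 0` (where `a*b = b⁻¹ab`),
then `φ(a,a⁻¹)` is constant. -/
theorem stmt_4 (A : Type*) [AddCommGroup A]
    (φ : Equiv.Perm (Fin 4) → Equiv.Perm (Fin 4) → A)
    (hcocycle : ∀ a b c : Equiv.Perm (Fin 4),
      IsFourCycle a → IsFourCycle b → IsFourCycle c →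
      φ a c - φ a b - φ (b⁻¹ * a * b) c + φ (c⁻¹ * a * c) (c⁻¹ * b * c) = 0) :
    ∀ a b : Equiv.Perm (Fin 4), IsFourCycle a → IsFourCycle b →
      φ a a⁻¹ = φ b b⁻¹ := by
  intro a b ha hb
  obtain ⟨c, rfl⟩ := isConj_iff.mp (isConj_iff_cycleType_eq.mpr (ha.trans hb.symm))
  have hc : c⁻¹ ∈ Subgroup.closure {a | IsFourCycle a} := by
    simp only [closure_setOf_isFourCycle, Subgroup.mem_top]
  have h := cocycle_apply_inv_conj_of_mem_closure (S := {a | IsFourCycle a}) hcocycle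
    (fun _ ↦ isFourCycle_inv) (fun _ ↦ isFourCycle_conj) hc a ha
  simpa only [inv_inv] using h.symm
end

section
/- Label the six 4-cycles of S₄ as e1 = (1234), e2 = (1423), e3 = (1342), e4 = (1432), e5 = (1324), e6 = (1243), so e1⁻¹ = e4, e2⁻¹ = e5, e3⁻¹ = e6. Define φ : Q6 × Q6 → ℤ/4ℤ by: φ(a,a) = 0 and φ(a,a⁻¹) = 1 for every a ∈ Q6; φ(e1,e3) = φ(e2,e1) = φ(e2,e3) = φ(e3,e1) = φ(e3,e5) = φ(e5,e1) = φ(e5,e6) = φ(e6,e1) = φ(e6,e2) = φ(e6,e5) = 1; φ(e1,e5) = φ(e5,e3) = 2; φ(e1,e6) = φ(e3,e2) = 3; and φ(a,b) = 0 in all remaining cases. Then φ is a quandle 2-cocycle of Q6 with coefficients in ℤ/4ℤ: φ(a,a) = 0 for all a ∈ Q6, and φ(a,c) − φ(a,b) − φ(b⁻¹ab, c) + φ(c⁻¹ac, c⁻¹bc) = 0 for all a, b, c ∈ Q6. -/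
/- The six 4-cycles of `S₄`, acting on `Fin 4 = {0,1,2,3}` (the letters `1,2,3,4`
of the paper correspond to `0,1,2,3`). -/
/-- `e1 = (1234)` -/
def e1 : Equiv.Perm (Fin 4) := c[0, 1, 2, 3]
/-- `e2 = (1423)` -/
def e2 : Equiv.Perm (Fin 4) := c[0, 3, 1, 2]
/-- `e3 = (1342)` -/
def e3 : Equiv.Perm (Fin 4) := c[0, 2, 3, 1]
/-- `e4 = (1432)` -/
def e4 : Equiv.Perm (Fin 4) := c[0, 3, 2, 1]
/-- `e5 = (1324)` -/
def e5 : Equiv.Perm (Fin 4) := c[0, 2, 1, 3]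
/-- `e6 = (1243)` -/
def e6 : Equiv.Perm (Fin 4) := c[0, 1, 3, 2]

/-- The specific quandle 2-cocycle `φ : Q6 × Q6 → ℤ/4ℤ` given by the table:
`φ(a,a) = 0` and `φ(a,a⁻¹) = 1` for every `a ∈ Q6`;
`φ(e1,e3) = φ(e2,e1) = φ(e2,e3) = φ(e3,e1) = φ(e3,e5) = φ(e5,e1) = φ(e5,e6)
  = φ(e6,e1) = φ(e6,e2) = φ(e6,e5) = 1`;
`φ(e1,e5) = φ(e5,e3) = 2`; `φ(e1,e6) = φ(e3,e2) = 3`; and `φ(a,b) = 0` otherwise. -/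
def phi (a b : Equiv.Perm (Fin 4)) : ZMod 4 :=
  if a = b then 0
  else if b = a⁻¹ then 1
  else if (a, b) = (e1, e3) ∨ (a, b) = (e2, e1) ∨ (a, b) = (e2, e3) ∨
          (a, b) = (e3, e1) ∨ (a, b) = (e3, e5) ∨ (a, b) = (e5, e1) ∨
          (a, b) = (e5, e6) ∨ (a, b) = (e6, e1) ∨ (a, b) = (e6, e2) ∨
          (a, b) = (e6, e5) then 1
  else if (a, b) = (e1, e5) ∨ (a, b) = (e5, e3) then 2
  else if (a, b) = (e1, e6) ∨ (a, b) = (e3, e2) then 3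
  else 0

/-- The quandle operation `a * b = b⁻¹ab` of the paper.  The paper composes
permutations left-to-right (it computes `(1342)*(1234) = (1324)`), so its
conjugation `b⁻¹ab` is `b * a * b⁻¹` in Mathlib's right-to-left composition
convention for `Equiv.Perm`. -/
def quandleOp (a b : Equiv.Perm (Fin 4)) : Equiv.Perm (Fin 4) := b * a * b⁻¹

/-! The six permutations `e1, …, e6` are exactly the 4-cycles of `S₄`, so the cocycle condition
reduces to the `6³` identities in `ℤ/4ℤ` indexed by triples of them, each checked directly. -/

open Equiv

def Q6 : Finset (Perm (Fin 4)) := {e1, e2, e3, e4, e5, e6}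

theorem isFourCycle_iff_mem_Q6 (a : Perm (Fin 4)) : IsFourCycle a ↔ a ∈ Q6 := by
  unfold IsFourCycle
  revert a
  decide

set_option maxRecDepth 10000 in
theorem phi_cocycle_on_Q6 : ∀ a ∈ Q6, ∀ b ∈ Q6, ∀ c ∈ Q6,
    phi a c - phi a b - phi (quandleOp a b) c + phi (quandleOp a c) (quandleOp b c) = 0 := by
  decide

/-- `φ` is a quandle 2-cocycle of the conjugation quandle `Q6` of 4-cycles in `S₄`
with coefficients in `ℤ/4ℤ`: `φ(a,a) = 0` for all `a ∈ Q6` and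
`φ(a,c) − φ(a,b) − φ(b⁻¹ab, c) + φ(c⁻¹ac, c⁻¹bc) = 0` for all `a, b, c ∈ Q6`
(conjugation written in the paper's left-to-right composition convention, i.e.
`b⁻¹ab = quandleOp a b`). -/
theorem stmt_5 :
    (∀ a : Equiv.Perm (Fin 4), IsFourCycle a → phi a a = 0) ∧
    (∀ a b c : Equiv.Perm (Fin 4), IsFourCycle a → IsFourCycle b → IsFourCycle c →
      phi a c - phi a b - phi (quandleOp a b) c
        + phi (quandleOp a c) (quandleOp b c) = 0) := by
  refine ⟨fun a _ => if_pos rfl, fun a b c ha hb hc => ?_⟩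
  rw [isFourCycle_iff_mem_Q6] at ha hb hc
  exact phi_cocycle_on_Q6 a ha b hb c hc
end
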